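/- arXiv:math/0503257 — 3 statements merged into one kernel-verified Lean document; each statement's English description precedes it below -/
import Mathlib

section
/- Consider the 2×3 matrix f with rows f₁ = (1,0,ξ₁), f₂ = (0,1,ξ₂) of holomorphic functions on ℂ². Its 2×2 minors are F₁₂ = 1, F₁₃ = ξ₂, F₂₃ = ξ₁ (up to sign), so |F|² = 1+|ξ₁|²+|ξ₂|². With σ = F̄/|F|² = (σ₁₂, σ₁₃, σ₂₃) = (1, ξ̄₂, ξ̄₁)/(1+|ξ₁|²+|ξ₂|²) viewed as a ℂ³-valued smooth function, one has σ ∧ (∂̄σ)² = (2/|F|⁶) dξ̄₁∧dξ̄₂ ∧ e₁∧e₂∧e₃; in particular σ ∧ (∂̄σ)² is nowhere zero on ℂ². -/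
open Complex

noncomputable section

/-- `∂̄/∂ξ̄₁` of a function on `ℂ²`, via the real derivative. -/
def dbar1 (g : ℂ × ℂ → ℂ) (ξ : ℂ × ℂ) : ℂ :=
  (fderiv ℝ g ξ (1, 0) + I * fderiv ℝ g ξ (I, 0)) / 2

/-- `∂̄/∂ξ̄₂` of a function on `ℂ²`, via the real derivative. -/
def dbar2 (g : ℂ × ℂ → ℂ) (ξ : ℂ × ℂ) : ℂ :=
  (fderiv ℝ g ξ (0, 1) + I * fderiv ℝ g ξ (0, I)) / 2

theorem det3_aux (a b c d e f g h i : ℂ) :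
    Matrix.det (Matrix.of ![![a, b, c], ![d, e, f], ![g, h, i]])
      = a * e * i - a * f * h - b * d * i + b * f * g + c * d * h - c * e * g := by
  rw [Matrix.det_fin_three]
  simp [Matrix.of_apply]

theorem alg_aux (u v dd : ℂ) (hne : dd ≠ 0)
    (hrel : dd = 1 + u * (starRingEnd ℂ) u + v * (starRingEnd ℂ) v) :
    2 * ((starRingEnd ℂ) u / dd * (-((starRingEnd ℂ) v * u / dd ^ 2)) * (-(v / dd ^ 2))
      - (starRingEnd ℂ) u / dd * (-(u / dd ^ 2)) * (dd⁻¹ - (starRingEnd ℂ) v * v / dd ^ 2)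
      - (starRingEnd ℂ) v / dd * (dd⁻¹ - (starRingEnd ℂ) u * u / dd ^ 2) * (-(v / dd ^ 2))
      + (starRingEnd ℂ) v / dd * (-(u / dd ^ 2)) * (-((starRingEnd ℂ) u * v / dd ^ 2))
      + 1 / dd * (dd⁻¹ - (starRingEnd ℂ) u * u / dd ^ 2) * (dd⁻¹ - (starRingEnd ℂ) v * v / dd ^ 2)
      - 1 / dd * (-((starRingEnd ℂ) v * u / dd ^ 2)) * (-((starRingEnd ℂ) u * v / dd ^ 2)))
      = 2 / dd ^ 3 := by
  ring

/-- For the `2 × 3` matrix with rows `f₁ = (1,0,ξ₁)`, `f₂ = (0,1,ξ₂)` the minors are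
`F₁₂ = 1`, `F₁₃ = ξ₂`, `F₂₃ = ξ₁`, `|F|² = 1 + |ξ₁|² + |ξ₂|²`, and
`σ = F̄/|F|² = (σ₁₂, σ₁₃, σ₂₃) = (1, ξ̄₂, ξ̄₁)/|F|²`.  Then (with the Koszul-complex
sign/ordering conventions) `σ ∧ (∂̄σ)² = 2 |F|⁻⁶ dξ̄₁ ∧ dξ̄₂ ⊗ e₁ ∧ e₂ ∧ e₃`: the
coefficient — `2` times the determinant whose rows are `σ, ∂̄₁σ, ∂̄₂σ` — equals
`2 (1 + |ξ₁|² + |ξ₂|²)⁻³`; in particular `σ ∧ (∂̄σ)²` is nowhere zero on `ℂ²`. -/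
theorem sigma_wedge_dbar_sigma_sq_nonvanishing :
    ∀ ξ : ℂ × ℂ,
      let D : ℂ × ℂ → ℂ := fun w => ((1 + ‖w.1‖ ^ 2 + ‖w.2‖ ^ 2 : ℝ) : ℂ)
      let σ : Fin 3 → ℂ × ℂ → ℂ :=
        ![fun w => (starRingEnd ℂ) w.1 / D w,
          fun w => (starRingEnd ℂ) w.2 / D w,
          fun w => 1 / D w]
      (2 * Matrix.det (Matrix.of
          ![![σ 0 ξ, σ 1 ξ, σ 2 ξ],
            ![dbar1 (σ 0) ξ, dbar1 (σ 1) ξ, dbar1 (σ 2) ξ],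
            ![dbar2 (σ 0) ξ, dbar2 (σ 1) ξ, dbar2 (σ 2) ξ]])
        = 2 / (D ξ) ^ 3) ∧
      2 * Matrix.det (Matrix.of
          ![![σ 0 ξ, σ 1 ξ, σ 2 ξ],
            ![dbar1 (σ 0) ξ, dbar1 (σ 1) ξ, dbar1 (σ 2) ξ],
            ![dbar2 (σ 0) ξ, dbar2 (σ 1) ξ, dbar2 (σ 2) ξ]]) ≠ 0 := by
  intro ξ D σ
  have hDfun : D = fun w => 1 + w.1 * (starRingEnd ℂ) w.1 + w.2 * (starRingEnd ℂ) w.2 := by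
    funext w
    simp only [D, Complex.mul_conj, Complex.normSq_eq_norm_sq]
    push_cast
    ring
  have hDpos : (0:ℝ) < 1 + ‖ξ.1‖ ^ 2 + ‖ξ.2‖ ^ 2 := by positivity
  have hDne : D ξ ≠ 0 := by
    simp only [D]
    exact_mod_cast hDpos.ne'
  have hfst : HasFDerivAt (fun w : ℂ × ℂ => w.1) (ContinuousLinearMap.fst ℝ ℂ ℂ) ξ :=
    (ContinuousLinearMap.fst ℝ ℂ ℂ).hasFDerivAt
  have hsnd : HasFDerivAt (fun w : ℂ × ℂ => w.2) (ContinuousLinearMap.snd ℝ ℂ ℂ) ξ :=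
    (ContinuousLinearMap.snd ℝ ℂ ℂ).hasFDerivAt
  have hconj1 : HasFDerivAt (fun w : ℂ × ℂ => (starRingEnd ℂ) w.1)
      ((Complex.conjCLE.toContinuousLinearMap).comp (ContinuousLinearMap.fst ℝ ℂ ℂ)) ξ :=
    (Complex.conjCLE.toContinuousLinearMap.hasFDerivAt).comp ξ hfst
  have hconj2 : HasFDerivAt (fun w : ℂ × ℂ => (starRingEnd ℂ) w.2)
      ((Complex.conjCLE.toContinuousLinearMap).comp (ContinuousLinearMap.snd ℝ ℂ ℂ)) ξ :=
    (Complex.conjCLE.toContinuousLinearMap.hasFDerivAt).comp ξ hsnd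
  have hD0 := ((hasFDerivAt_const (1:ℂ) ξ).add (hfst.mul hconj1)).add (hsnd.mul hconj2)
  rw [show ((fun x => (1:ℂ)) + (fun w : ℂ × ℂ => w.1) * fun w => (starRingEnd ℂ) w.1) + (fun w : ℂ × ℂ => w.2) * (fun w => (starRingEnd ℂ) w.2) = D from by rw [hDfun]; rfl] at hD0
  have hinv := ((hasDerivAt_inv hDne).hasFDerivAt.restrictScalars ℝ).comp ξ hD0
  -- σ 0
  have hσ0 := hconj1.mul hinv
  have hfun0 : (fun w => (starRingEnd ℂ) w.1 / D w)
      = (fun y : ℂ × ℂ => (starRingEnd ℂ) y.1) * ((fun x => x⁻¹) ∘ D) := by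
    funext w; simp [div_eq_mul_inv]
  rw [← hfun0] at hσ0
  -- σ 1
  have hσ1 := hconj2.mul hinv
  have hfun1 : (fun w => (starRingEnd ℂ) w.2 / D w)
      = (fun y : ℂ × ℂ => (starRingEnd ℂ) y.2) * ((fun x => x⁻¹) ∘ D) := by
    funext w; simp [div_eq_mul_inv]
  rw [← hfun1] at hσ1
  -- σ 2
  have hσ2 := hinv
  have hfun2 : (fun w => 1 / D w) = (fun x => x⁻¹) ∘ D := by
    funext w; simp
  rw [← hfun2] at hσ2
  have hs0 : σ 0 = fun w => (starRingEnd ℂ) w.1 / D w := rfl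
  have hs1 : σ 1 = fun w => (starRingEnd ℂ) w.2 / D w := rfl
  have hs2 : σ 2 = fun w => 1 / D w := rfl
  set u := ξ.1 with hu
  set v := ξ.2 with hv
  set d := D ξ with hd
  have e10 : dbar1 (σ 0) ξ = d⁻¹ - (starRingEnd ℂ) u * u / d ^ 2 := by
    rw [hs0, dbar1, hσ0.fderiv]
    simp
    ring_nf
    simp only [Complex.I_sq]
    ring
  have e20 : dbar2 (σ 0) ξ = -((starRingEnd ℂ) u * v / d ^ 2) := by
    rw [hs0, dbar2, hσ0.fderiv]
    simp
    ring_nf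
    simp only [Complex.I_sq]
    ring
  have e11 : dbar1 (σ 1) ξ = -((starRingEnd ℂ) v * u / d ^ 2) := by
    rw [hs1, dbar1, hσ1.fderiv]
    simp
    ring_nf
    simp only [Complex.I_sq]
    ring
  have e21 : dbar2 (σ 1) ξ = d⁻¹ - (starRingEnd ℂ) v * v / d ^ 2 := by
    rw [hs1, dbar2, hσ1.fderiv]
    simp
    ring_nf
    simp only [Complex.I_sq]
    ring
  have e12 : dbar1 (σ 2) ξ = -(u / d ^ 2) := by
    rw [hs2, dbar1, hσ2.fderiv]
    simp
    ring_nf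
    simp only [Complex.I_sq]
    ring
  have e22 : dbar2 (σ 2) ξ = -(v / d ^ 2) := by
    rw [hs2, dbar2, hσ2.fderiv]
    simp
    ring_nf
    simp only [Complex.I_sq]
    ring
  have e00 : σ 0 ξ = (starRingEnd ℂ) u / d := rfl
  have e01 : σ 1 ξ = (starRingEnd ℂ) v / d := rfl
  have e02 : σ 2 ξ = 1 / d := rfl
  have hrel : d = 1 + u * (starRingEnd ℂ) u + v * (starRingEnd ℂ) v := by
    rw [hd, hDfun]
  have hne' : (1 + u * (starRingEnd ℂ) u + v * (starRingEnd ℂ) v : ℂ) ≠ 0 := hrel ▸ hDne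
  have key : 2 * Matrix.det (Matrix.of
          ![![σ 0 ξ, σ 1 ξ, σ 2 ξ],
            ![dbar1 (σ 0) ξ, dbar1 (σ 1) ξ, dbar1 (σ 2) ξ],
            ![dbar2 (σ 0) ξ, dbar2 (σ 1) ξ, dbar2 (σ 2) ξ]]) = 2 / d ^ 3 := by
    rw [det3_aux, e00, e01, e02, e10, e11, e12, e20, e21, e22]
    exact alg_aux u v d hDne hrel
  exact ⟨key, key ▸ div_ne_zero two_ne_zero (pow_ne_zero 3 hDne)⟩

end
end

section
/- Let f : E → Q be as above and suppose the determinant section F factors as F = F₀·F' with F₀ a holomorphic function and F' a nowhere-vanishing holomorphic section of ΛʳE*⊗det Q*. Then s' = F₀σ and S' = F₀·Σ (where Σ = σ₁∧⋯∧σ_r ⊗ ε* is the minimal dual section with F·Σ = 1, and σ the minimal right inverse of f) extend smoothly across the degeneracy set Z = {F₀ = 0}. -/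
open Complex Matrix

attribute [local instance] Classical.propDecidable

noncomputable section

variable (n m r : ℕ) (f : Fin r → Fin m → (Fin n → ℂ) → ℂ)

/-- The matrix `f f*`. -/
def gram (z : Fin n → ℂ) : Matrix (Fin r) (Fin r) ℂ :=
  Matrix.of fun k l => ∑ i, f k i z * (starRingEnd ℂ) (f l i z)

/-- The entries of the minimal right inverse `σ = f*(f f*)⁻¹` of `f`. -/
def minimalSigma (j : Fin r) (i : Fin m) (z : Fin n → ℂ) : ℂ :=
  ∑ l, (starRingEnd ℂ) (f l i z) * ((gram n m r f z)⁻¹ l j)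

/-- The maximal minor of `f` at the increasing multiindex `I`. -/
def minor (I : {I : Fin r → Fin m // StrictMono I}) (z : Fin n → ℂ) : ℂ :=
  Matrix.det (Matrix.of fun j k => f j (I.1 k) z)

/-- Two strictly monotone maps that agree up to precomposition with permutations are equal. -/
theorem my_strictMono_eq_of_comp {r m : ℕ} {I J : Fin r → Fin m} (hI : StrictMono I)
    (hJ : StrictMono J) (σ τ : Equiv.Perm (Fin r)) (h : I ∘ σ = J ∘ τ) : I = J := by
  classical
  set s : Finset (Fin m) := Finset.univ.image J with hs
  have hcard : s.card = r := by
    rw [hs, Finset.card_image_of_injective _ hJ.injective, Finset.card_univ, Fintype.card_fin]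
  have hJmem : ∀ x, J x ∈ s := fun x => Finset.mem_image.2 ⟨x, Finset.mem_univ _, rfl⟩
  have hImem : ∀ x, I x ∈ s := by
    intro x
    have : I x = J (τ (σ.symm x)) := by
      have := congrFun h (σ.symm x)
      simpa using this
    rw [this]; exact hJmem _
  rw [Finset.orderEmbOfFin_unique hcard hImem hI, Finset.orderEmbOfFin_unique hcard hJmem hJ]

/-- The Cauchy–Binet formula. -/
theorem my_cauchy_binet {R : Type*} [CommRing R] {r m : ℕ}
    (A : Matrix (Fin r) (Fin m) R) (B : Matrix (Fin m) (Fin r) R) :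
    (A * B).det = ∑ I : {I : Fin r → Fin m // StrictMono I},
      (A.submatrix id I.1).det * (B.submatrix I.1 id).det := by
  classical
  have h1 : (A * B).det
      = ∑ p : Fin r → Fin m, (A.submatrix id p).det * ∏ i, B (p i) i := by
    simp only [Matrix.det_apply', Matrix.mul_apply, Finset.prod_univ_sum, Finset.mul_sum,
      Fintype.piFinset_univ]
    rw [Finset.sum_comm]
    refine Finset.sum_congr rfl fun p _ => ?_
    rw [Finset.sum_mul]
    refine Finset.sum_congr rfl fun σ _ => ?_
    simp only [Matrix.submatrix_apply, id_eq, Finset.prod_mul_distrib]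
    ring
  rw [h1, ← Finset.sum_filter_add_sum_filter_not Finset.univ (fun p => Function.Injective p)]
  have h0 : ∑ p ∈ Finset.univ.filter (fun p => ¬ Function.Injective p),
      (A.submatrix id p).det * ∏ i, B (p i) i = 0 := by
    apply Finset.sum_eq_zero
    intro p hp
    have hpni : ¬ Function.Injective p := (Finset.mem_filter.1 hp).2
    obtain ⟨a, b, hab, hne⟩ : ∃ a b, p a = p b ∧ a ≠ b := by
      unfold Function.Injective at hpni
      push_neg at hpni
      exact hpni
    have : (A.submatrix id p).det = 0 :=
      Matrix.det_zero_of_column_eq hne (fun k => by simp [Matrix.submatrix_apply, hab])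
    rw [this, zero_mul]
  rw [h0, add_zero]
  have h2 : ∀ I : {I : Fin r → Fin m // StrictMono I},
      (A.submatrix id I.1).det * (B.submatrix I.1 id).det
        = ∑ σ : Equiv.Perm (Fin r),
            (A.submatrix id (I.1 ∘ σ)).det * ∏ i, B (I.1 (σ i)) i := by
    intro I
    rw [Matrix.det_apply' (B.submatrix I.1 id), Finset.mul_sum]
    refine Finset.sum_congr rfl fun σ _ => ?_
    have hsub : A.submatrix id (I.1 ∘ σ) = (A.submatrix id I.1).submatrix id σ := rfl
    rw [hsub, Matrix.det_permute' σ]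
    simp only [Matrix.submatrix_apply, id_eq]
    ring
  rw [Finset.sum_congr rfl fun I _ => h2 I, ← Finset.sum_product']
  have huniv : (Finset.univ ×ˢ Finset.univ :
      Finset ({I : Fin r → Fin m // StrictMono I} × Equiv.Perm (Fin r))) = Finset.univ := by
    simp
  rw [huniv]
  refine (Finset.sum_bij
    (fun (x : {I : Fin r → Fin m // StrictMono I} × Equiv.Perm (Fin r)) _ =>
      (x.1.1 ∘ x.2 : Fin r → Fin m)) ?_ ?_ ?_ ?_).symm
  · intro x _
    exact Finset.mem_filter.2 ⟨Finset.mem_univ _, x.1.2.injective.comp x.2.injective⟩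
  · rintro ⟨I, σ⟩ _ ⟨J, τ⟩ _ h
    have hIJ : I.1 = J.1 := my_strictMono_eq_of_comp I.2 J.2 σ τ h
    have hστ : σ = τ := by
      ext x
      have : I.1 (σ x) = J.1 (τ x) := congrFun h x
      rw [← hIJ] at this
      exact congrArg Fin.val (I.2.injective this)
    exact Prod.ext (Subtype.ext hIJ) hστ
  · intro p hp
    have hpi : Function.Injective p := (Finset.mem_filter.1 hp).2
    set s : Finset (Fin m) := Finset.univ.image p with hs
    have hcard : s.card = r := by
      rw [hs, Finset.card_image_of_injective _ hpi, Finset.card_univ, Fintype.card_fin]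
    have hmem : ∀ x, p x ∈ s := fun x => Finset.mem_image.2 ⟨x, Finset.mem_univ _, rfl⟩
    set σ0 : Fin r → Fin r := fun x => (s.orderIsoOfFin hcard).symm ⟨p x, hmem x⟩ with hσ0
    have hIσ : ∀ x, s.orderEmbOfFin hcard (σ0 x) = p x := by
      intro x
      rw [← Finset.coe_orderIsoOfFin_apply]
      simp [hσ0]
    have hσinj : Function.Injective σ0 := by
      intro a b hab
      apply hpi
      rw [← hIσ a, ← hIσ b, hab]
    obtain ⟨σ, hσ⟩ : ∃ σ : Equiv.Perm (Fin r), ∀ x, σ x = σ0 x :=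
      ⟨Equiv.ofBijective σ0 (Finite.injective_iff_bijective.1 hσinj), fun _ => rfl⟩
    refine ⟨⟨⟨(s.orderEmbOfFin hcard : Fin r → Fin m), (s.orderEmbOfFin hcard).strictMono⟩, σ⟩,
      Finset.mem_univ _, ?_⟩
    funext x
    simp only [Function.comp_apply, hσ]
    exact hIσ x
  · rintro ⟨I, σ⟩ _
    rfl

/-- Expanding a determinant along a replaced row, via the adjugate. -/
theorem my_adj_row_sum {R : Type*} [CommRing R] {r : ℕ}
    (G : Matrix (Fin r) (Fin r) R) (j : Fin r) (w : Fin r → R) :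
    ∑ l, w l * G.adjugate l j = (G.updateRow j w).det := by
  classical
  have key : ∀ v : Fin r → R, (G.updateRow j v).det = Matrix.cramer Gᵀ v j := fun v => by
    rw [Matrix.cramer_apply, Matrix.updateCol_transpose, Matrix.det_transpose]
  have hw : w = ∑ l, w l • (Pi.single l (1 : R) : Fin r → R) := by
    funext k
    simp [Pi.single_apply]
  calc ∑ l, w l * G.adjugate l j
      = ∑ l, w l * Matrix.cramer Gᵀ (Pi.single l 1) j := by
        refine Finset.sum_congr rfl fun l _ => ?_
        rw [Matrix.adjugate_apply, key]
    _ = Matrix.cramer Gᵀ (∑ l, w l • (Pi.single l (1:R) : Fin r → R)) j := by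
        rw [map_sum]
        simp [Finset.sum_apply]
    _ = (G.updateRow j w).det := by rw [← hw, key]

/-- **Lemma (smoothness across the degeneracy set).**  Let `f` be a holomorphic `r × m`
matrix on an open `U ⊆ ℂⁿ` whose determinant section `F` (the tuple of maximal minors)
factors as `F = F₀ F'` with `F₀` holomorphic and `F'` a nowhere-vanishing holomorphic
tuple, and let `Z = {F₀ = 0}`.  Then `s' = F₀ σ` (entrywise) and `S' = F₀ Σ`
(coordinatewise, where `Σ = σ₁ ∧ ⋯ ∧ σ_r ⊗ ε*` has coordinates `conj F_I / |F|²`),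
defined off `Z` via the minimal right inverse `σ = f*(ff*)⁻¹`, extend smoothly
(`C^∞` over `ℝ`) across `Z` to all of `U`. -/
theorem F0_sigma_smooth_across_Z
    (hr : 1 ≤ r) (hrm : r ≤ m)
    (U : Set (Fin n → ℂ)) (hU : IsOpen U)
    (hf : ∀ j i, AnalyticOnNhd ℂ (f j i) U)
    (F₀ : (Fin n → ℂ) → ℂ) (hF₀ : AnalyticOnNhd ℂ F₀ U)
    (F' : {I : Fin r → Fin m // StrictMono I} → (Fin n → ℂ) → ℂ)
    (hF' : ∀ I, AnalyticOnNhd ℂ (F' I) U)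
    (hfac : ∀ I, ∀ z ∈ U, minor n m r f I z = F₀ z * F' I z)
    (hF'ne : ∀ z ∈ U, ∃ I, F' I z ≠ 0)
    (Z : Set (Fin n → ℂ)) (hZ : Z = {z ∈ U | F₀ z = 0}) :
    (∀ (j : Fin r) (i : Fin m), ∃ s' : (Fin n → ℂ) → ℂ,
      ContDiffOn ℝ (⊤ : ℕ∞) s' U ∧
      ∀ z ∈ U \ Z, s' z = F₀ z * minimalSigma n m r f j i z) ∧
    (∀ I : {I : Fin r → Fin m // StrictMono I}, ∃ S' : (Fin n → ℂ) → ℂ,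
      ContDiffOn ℝ (⊤ : ℕ∞) S' U ∧
      ∀ z ∈ U \ Z, S' z = F₀ z * (starRingEnd ℂ) (minor n m r f I z) /
        ((∑ J : {I : Fin r → Fin m // StrictMono I}, ‖minor n m r f J z‖ ^ 2 : ℝ) : ℂ)) := by
  classical
  have hF0ne : ∀ z ∈ U \ Z, F₀ z ≠ 0 := by
    intro z hz h0
    exact hz.2 (hZ ▸ ⟨hz.1, h0⟩)
  -- real-analyticity toolkit
  have hR : ∀ g : (Fin n → ℂ) → ℂ, AnalyticOnNhd ℂ g U → AnalyticOnNhd ℝ g U :=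
    fun g hg => hg.restrictScalars
  have hconjA : ∀ g : (Fin n → ℂ) → ℂ, AnalyticOnNhd ℂ g U →
      AnalyticOnNhd ℝ (fun z => (starRingEnd ℂ) (g z)) U := by
    intro g hg z hz
    have h1 : AnalyticAt ℝ (⇑Complex.conjCLE.toContinuousLinearMap ∘ g) z :=
      (Complex.conjCLE.toContinuousLinearMap.analyticAt _).comp (hR g hg z hz)
    simpa [Function.comp_def] using h1
  have hnorm : ∀ w : ℂ, ((‖w‖ ^ 2 : ℝ) : ℂ) = w * (starRingEnd ℂ) w := fun w => by
    rw [Complex.sq_norm]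
    exact (Complex.mul_conj w).symm
  -- the denominator
  set Dden : (Fin n → ℂ) → ℂ :=
    fun z => ∑ J : {I : Fin r → Fin m // StrictMono I}, (starRingEnd ℂ) (F' J z) * F' J z
    with hDden
  have hDdenA : AnalyticOnNhd ℝ Dden U :=
    Finset.analyticOnNhd_fun_sum _ fun J _ => (hconjA _ (hF' J)).mul (hR _ (hF' J))
  have hDden_eq : ∀ z, Dden z = ((∑ J : {I : Fin r → Fin m // StrictMono I},
      ‖F' J z‖ ^ 2 : ℝ) : ℂ) := by
    intro z
    rw [Complex.ofReal_sum]
    exact Finset.sum_congr rfl fun J _ => by rw [hnorm, mul_comm]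
  have hDden_ne : ∀ z ∈ U, Dden z ≠ 0 := by
    intro z hz
    obtain ⟨I0, hI0⟩ := hF'ne z hz
    have hpos : 0 < ∑ J : {I : Fin r → Fin m // StrictMono I}, ‖F' J z‖ ^ 2 :=
      Finset.sum_pos' (fun J _ => by positivity) ⟨I0, Finset.mem_univ _, pow_pos (norm_pos_iff.2 hI0) 2⟩
    rw [hDden_eq, Complex.ofReal_ne_zero]
    exact ne_of_gt hpos
  have hDdeninv : AnalyticOnNhd ℝ (fun z => (Dden z)⁻¹) U := hDdenA.inv hDden_ne
  -- the matrix of f and its basic determinant identities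
  set Amat : (Fin n → ℂ) → Matrix (Fin r) (Fin m) ℂ := fun z => Matrix.of fun a b => f a b z
    with hAmat
  have hgram : ∀ z, gram n m r f z = Amat z * (Amat z)ᴴ := by
    intro z
    ext k l
    simp [_root_.gram, Matrix.mul_apply, Matrix.conjTranspose_apply, hAmat, RCLike.star_def]
  have hminor : ∀ (J : {I : Fin r → Fin m // StrictMono I}) z,
      ((Amat z).submatrix id J.1).det = minor n m r f J z := fun J z => rfl
  have hminorconj : ∀ (J : {I : Fin r → Fin m // StrictMono I}) z,
      (((Amat z)ᴴ).submatrix J.1 id).det = (starRingEnd ℂ) (minor n m r f J z) := by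
    intro J z
    rw [← Matrix.conjTranspose_submatrix, Matrix.det_conjTranspose, hminor]
    rfl
  have hdetG : ∀ z ∈ U, (gram n m r f z).det = (F₀ z * (starRingEnd ℂ) (F₀ z)) * Dden z := by
    intro z hz
    rw [hgram, my_cauchy_binet, hDden, Finset.mul_sum]
    refine Finset.sum_congr rfl fun J _ => ?_
    rw [hminor, hminorconj, hfac J z hz, _root_.map_mul]
    ring
  constructor
  · -- the σ part
    intro j i
    set DI : {I : Fin r → Fin m // StrictMono I} → (Fin n → ℂ) → ℂ :=
      fun J z => Matrix.det (Matrix.of fun a b =>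
        if a = j then (Pi.single i (1:ℂ) : Fin m → ℂ) (J.1 b) else f a (J.1 b) z) with hDI
    have hDIA : ∀ J, AnalyticOnNhd ℂ (DI J) U := by
      intro J
      have hrw : DI J = fun z => ∑ σ : Equiv.Perm (Fin r), ((Equiv.Perm.sign σ : ℤ) : ℂ) *
          ∏ k, (if σ k = j then (Pi.single i (1:ℂ) : Fin m → ℂ) (J.1 k) else f (σ k) (J.1 k) z) := by
        funext z
        exact Matrix.det_apply' _
      rw [hrw]
      refine Finset.analyticOnNhd_fun_sum _ fun σ _ => analyticOnNhd_const.mul ?_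
      refine Finset.analyticOnNhd_fun_prod _ fun k _ => ?_
      by_cases hk : σ k = j
      · simpa [hk] using
          (analyticOnNhd_const : AnalyticOnNhd ℂ (fun _ => (Pi.single i (1:ℂ) : Fin m → ℂ) (J.1 k)) U)
      · simpa [hk] using hf (σ k) (J.1 k)
    set Nnum : (Fin n → ℂ) → ℂ :=
      fun z => ∑ J : {I : Fin r → Fin m // StrictMono I}, (starRingEnd ℂ) (F' J z) * DI J z
      with hNnum
    have hNnumA : AnalyticOnNhd ℝ Nnum U :=
      Finset.analyticOnNhd_fun_sum _ fun J _ => (hconjA _ (hF' J)).mul (hR _ (hDIA J))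
    refine ⟨fun z => Nnum z * (Dden z)⁻¹,
      (hNnumA.mul hDdeninv).contDiffOn_of_completeSpace, ?_⟩
    intro z hz
    have hzU := hz.1
    have h0 := hF0ne z hz
    have hconj0 : (starRingEnd ℂ) (F₀ z) ≠ 0 := fun hc =>
      h0 (by simpa using congrArg (starRingEnd ℂ) hc)
    have hDne := hDden_ne z hzU
    have hkey : ∑ l, (starRingEnd ℂ) (f l i z) * (gram n m r f z).adjugate l j
        = (starRingEnd ℂ) (F₀ z) * Nnum z := by
      rw [my_adj_row_sum]
      have hupd : (gram n m r f z).updateRow j (fun l => (starRingEnd ℂ) (f l i z))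
          = ((Amat z).updateRow j (Pi.single i 1)) * (Amat z)ᴴ := by
        ext a b
        by_cases ha : a = j
        · subst ha
          simp [Matrix.mul_apply, Matrix.conjTranspose_apply, hAmat,
            Pi.single_apply, ite_mul, RCLike.star_def]
        · simp [Matrix.mul_apply, Matrix.updateRow_apply, ha, _root_.gram,
            Matrix.conjTranspose_apply, RCLike.star_def, hAmat]
      rw [hupd, my_cauchy_binet, hNnum, Finset.mul_sum]
      refine Finset.sum_congr rfl fun J _ => ?_
      have hBsub : (((Amat z).updateRow j (Pi.single i 1)).submatrix id J.1).det = DI J z := by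
        rw [hDI]
        congr 1
        ext a b
        simp [Matrix.updateRow_apply, hAmat]
      rw [hBsub, hminorconj, hfac J z hzU, _root_.map_mul]
      ring
    have hdet := hdetG z hzU
    have hdet_ne : (gram n m r f z).det ≠ 0 := by
      rw [hdet]
      exact mul_ne_zero (mul_ne_zero h0 hconj0) hDne
    have hσ : minimalSigma n m r f j i z
        = (gram n m r f z).det⁻¹ *
          ∑ l, (starRingEnd ℂ) (f l i z) * (gram n m r f z).adjugate l j := by
      rw [minimalSigma, Matrix.inv_def, Ring.inverse_eq_inv, Finset.mul_sum]
      refine Finset.sum_congr rfl fun l _ => ?_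
      simp only [Matrix.smul_apply, smul_eq_mul]
      ring
    rw [hσ, hkey, hdet]
    field_simp
  · -- the Σ part
    intro I
    refine ⟨fun z => (starRingEnd ℂ) (F' I z) * (Dden z)⁻¹,
      ((hconjA _ (hF' I)).mul hDdeninv).contDiffOn_of_completeSpace, ?_⟩
    intro z hz
    have hzU := hz.1
    have h0 := hF0ne z hz
    have hconj0 : (starRingEnd ℂ) (F₀ z) ≠ 0 := fun hc =>
      h0 (by simpa using congrArg (starRingEnd ℂ) hc)
    have hDne := hDden_ne z hzU
    have hsum : ((∑ J : {I : Fin r → Fin m // StrictMono I}, ‖minor n m r f J z‖ ^ 2 : ℝ) : ℂ)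
        = (F₀ z * (starRingEnd ℂ) (F₀ z)) * Dden z := by
      rw [Complex.ofReal_sum, hDden, Finset.mul_sum]
      refine Finset.sum_congr rfl fun J _ => ?_
      rw [hnorm, hfac J z hzU, _root_.map_mul]
      ring
    rw [hfac I z hzU, hsum, _root_.map_mul]
    field_simp

end
end

section
/- Let u be a smooth function on a neighborhood of the closed unit disk minus a finite set Z of points in the open disk, and suppose there exist currents U, R on the whole neighborhood such that the maps λ ↦ |F|^{2λ}u and λ ↦ ∂̄|F|^{2λ}∧u (defined for Re λ ≫ 0, F holomorphic with zero set Z) extend analytically to Re λ > −ε with values U, R at λ = 0. If moreover δ_F U = 1 − R holds with R·φ = 0 for a holomorphic function φ, and one can solve the ∂̄-equations ∂̄wₖ = Uₖφ + δwₖ₊₁ locally, then Ψ = U₁φ + δw₂ is holomorphic and satisfies δ_F Ψ = φ; i.e., φ belongs to the ideal generated by the components of F. -/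
/-- **The abstract division mechanism.**  Let `V` be a complex vector space of
"currents", equipped with  `∂̄` (`dbar`) and the morphism `δ` of the complex
(including the augmentation `δ_F` at the bottom level), satisfying `δ ∘ δ = 0`,
and anticommuting: `∂̄ δ = −δ ∂̄`.  Let `mulφ` denote multiplication by a holomorphic
function `φ`: it commutes with `δ`, and holomorphy of `φ` is encoded by commutation
with `∂̄`.  Suppose the currents `U k` (`k ≥ 1`) and `R k` (`k ≥ 0`) satisfy the
graded components of `(δ − ∂̄) U = 1 − R` applied to `φ`, namely
`δ(U₁ φ) = φ − R₀ φ` and `δ(U_{k+1} φ) − ∂̄(U_k φ) = −R_k φ` for `k ≥ 1`;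
suppose the residue annihilates `φ`, `R_k φ = 0` for all `k`; and suppose the
`∂̄`-equations `∂̄ w_k = U_k φ + δ w_{k+1}` are solvable for `k ≥ 2`.
Then `Ψ = U₁ φ + δ w₂` is holomorphic (`∂̄ Ψ = 0`) and satisfies `δ_F Ψ = φ`;
that is, `φ` belongs to the ideal generated by the components of `F`. -/
theorem abstract_division_mechanism
    (V : Type*) [AddCommGroup V] [Module ℂ V]
    (dbar δ : V →ₗ[ℂ] V)
    (hδδ : δ ∘ₗ δ = 0)
    (hanti : dbar ∘ₗ δ = - (δ ∘ₗ dbar))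
    (mulφ : V →ₗ[ℂ] V)
    (hφδ : mulφ ∘ₗ δ = δ ∘ₗ mulφ)
    (hφdbar : mulφ ∘ₗ dbar = dbar ∘ₗ mulφ)     -- `φ` is holomorphic
    (U : ℕ → V) (R : ℕ → V) (φv : V)
    (hdeg0 : δ (mulφ (U 1)) = φv - mulφ (R 0))
    (hdeg : ∀ k : ℕ, 1 ≤ k →
      δ (mulφ (U (k + 1))) - dbar (mulφ (U k)) = - mulφ (R k))
    (hRφ : ∀ k : ℕ, mulφ (R k) = 0)
    (w : ℕ → V)
    (hw : ∀ k : ℕ, 2 ≤ k → dbar (w k) = mulφ (U k) + δ (w (k + 1))) :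
    dbar (mulφ (U 1) + δ (w 2)) = 0 ∧
    δ (mulφ (U 1) + δ (w 2)) = φv := by
  have h1 : dbar (mulφ (U 1)) = δ (mulφ (U 2)) := by
    have := hdeg 1 (le_refl 1)
    rw [hRφ 1, neg_zero, sub_eq_zero] at this
    exact this.symm
  constructor
  · rw [map_add, h1]
    have hdb : dbar (δ (w 2)) = - δ (dbar (w 2)) := by
      have := congrArg (fun f => f (w 2)) hanti
      simpa using this
    rw [hdb, hw 2 (le_refl 2), map_add]
    have hδδ2 : δ (δ (w 3)) = 0 := by
      have := congrArg (fun f => f (w 3)) hδδ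
      simpa using this
    rw [hδδ2]
    abel
  · rw [map_add, hdeg0, hRφ 0]
    have hδδ2 : δ (δ (w 2)) = 0 := by
      have := congrArg (fun f => f (w 2)) hδδ
      simpa using this
    rw [hδδ2]
    abel
end
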